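/- Let n ≥ 2, let A = (a_{ij}) be a symmetric positive-definite real n×n matrix, let β be a nonzero linear form on ℝⁿ, and let P, Q, K ∈ ℝ. If P·α(y)⁴ + Q·β(y)·α(y)³ − 6K·β(y)²·α(y)² − 4K·β(y)³·α(y) − K·β(y)⁴ = 0 for all y ∈ ℝⁿ, where α(y) := √(a_{ij}yⁱyʲ), then K = 0, P = 0, and Q = 0. -/

import Mathlib

open scoped BigOperators

noncomputable section

/-- `α(y) = √(a_{ij} yⁱ yʲ)`. -/
def alphaOf {n : ℕ} (A : Matrix (Fin n) (Fin n) ℝ) (y : Fin n → ℝ) : ℝ :=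
  Real.sqrt (∑ i, ∑ j, A i j * y i * y j)

/-- `β(y) = b_i yⁱ`. -/
def betaOf {n : ℕ} (b : Fin n → ℝ) (y : Fin n → ℝ) : ℝ := ∑ i, b i * y i

/-! At a nonzero `z` with `β(z) = 0`, which exists because `n ≥ 2`, the identity reduces to
`P α(z)⁴ = 0`, so `P = 0`. Evaluating at `b` and `-b` (where `α` is even and `β` odd) and taking the
even part gives `-K β² (6α² + β²) = 0`, so `K = 0`; the odd part `2 Q β α³ = 0` then gives `Q = 0`. -/

open Matrix

lemma betaOf_eq_dotProduct {n : ℕ} (b y : Fin n → ℝ) : betaOf b y = b ⬝ᵥ y := rfl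

lemma alphaOf_eq_sqrt_dotProduct {n : ℕ} (A : Matrix (Fin n) (Fin n) ℝ) (y : Fin n → ℝ) :
    alphaOf A y = √(y ⬝ᵥ A *ᵥ y) := by
  simp only [alphaOf, dotProduct, mulVec, Finset.mul_sum]
  congr 1
  exact Finset.sum_congr rfl fun i _ ↦ Finset.sum_congr rfl fun j _ ↦ by ring

lemma alphaOf_pos {n : ℕ} {A : Matrix (Fin n) (Fin n) ℝ} (hA : A.PosDef) {y : Fin n → ℝ}
    (hy : y ≠ 0) : 0 < alphaOf A y := by
  rw [alphaOf_eq_sqrt_dotProduct]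
  exact Real.sqrt_pos.mpr (by simpa using hA.dotProduct_mulVec_pos hy)

lemma alphaOf_neg {n : ℕ} (A : Matrix (Fin n) (Fin n) ℝ) (y : Fin n → ℝ) :
    alphaOf A (-y) = alphaOf A y := by
  simp [alphaOf_eq_sqrt_dotProduct, mulVec_neg]

lemma betaOf_neg {n : ℕ} (b y : Fin n → ℝ) : betaOf b (-y) = -betaOf b y := by
  simp [betaOf_eq_dotProduct]

lemma betaOf_self_ne_zero {n : ℕ} {b : Fin n → ℝ} (hb : b ≠ 0) : betaOf b b ≠ 0 := by
  simpa [betaOf_eq_dotProduct] using hb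

lemma exists_ne_zero_betaOf_eq_zero {n : ℕ} (hn : 2 ≤ n) (b : Fin n → ℝ) :
    ∃ z ≠ 0, betaOf b z = 0 := by
  have hker : LinearMap.ker (dotProductBilin ℝ ℝ b) ≠ ⊥ :=
    LinearMap.ker_ne_bot_of_finrank_lt (by rw [Module.finrank_self, Module.finrank_fin_fun]; omega)
  obtain ⟨z, hz, hz0⟩ := (Submodule.ne_bot_iff _).mp hker
  exact ⟨z, hz0, hz⟩

lemma quartic_coeffs_eq_zero {a c Q K : ℝ} (ha : 0 < a) (hc : c ≠ 0)
    (hplus : Q * c * a ^ 3 - 6 * K * c ^ 2 * a ^ 2 - 4 * K * c ^ 3 * a - K * c ^ 4 = 0)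
    (hminus : -Q * c * a ^ 3 - 6 * K * c ^ 2 * a ^ 2 + 4 * K * c ^ 3 * a - K * c ^ 4 = 0) :
    K = 0 ∧ Q = 0 := by
  have heven : K * (c ^ 2 * (6 * a ^ 2 + c ^ 2)) = 0 := by
    linear_combination (-1 / 2 : ℝ) * (hplus + hminus)
  have hK : K = 0 := (mul_eq_zero.mp heven).resolve_right (by positivity)
  have hodd : Q * (2 * c * a ^ 3) = 0 := by
    linear_combination hplus - hminus + 8 * c ^ 3 * a * hK
  exact ⟨hK, (mul_eq_zero.mp hodd).resolve_right (by positivity)⟩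

theorem stmt_11_general {n : ℕ} (hn : 2 ≤ n) (A : Matrix (Fin n) (Fin n) ℝ)
    (hpos : A.PosDef) (b : Fin n → ℝ) (hb : b ≠ 0)
    (P Q K : ℝ)
    (h : ∀ y : Fin n → ℝ,
      P * (alphaOf A y)^4 + Q * betaOf b y * (alphaOf A y)^3
        - 6 * K * (betaOf b y)^2 * (alphaOf A y)^2
        - 4 * K * (betaOf b y)^3 * alphaOf A y
        - K * (betaOf b y)^4 = 0) :
    K = 0 ∧ P = 0 ∧ Q = 0 := by
  obtain ⟨z, hz0, hbz⟩ := exists_ne_zero_betaOf_eq_zero hn b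
  have hP : P = 0 := by
    have hz := h z
    simp only [hbz] at hz
    simpa [(alphaOf_pos hpos hz0).ne'] using hz
  subst hP
  have hplus := h b
  have hminus := h (-b)
  rw [alphaOf_neg, betaOf_neg] at hminus
  obtain ⟨hK, hQ⟩ := quartic_coeffs_eq_zero (Q := Q) (K := K) (alphaOf_pos hpos hb)
    (betaOf_self_ne_zero hb) (by linear_combination hplus) (by linear_combination hminus)
  exact ⟨hK, rfl, hQ⟩

/-- The algebraic splitting step for constant flag curvature: if
`P α⁴ + Q β α³ − 6K β² α² − 4K β³ α − K β⁴ = 0` identically, with `β ≠ 0`,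
then `K = P = Q = 0`. -/
theorem stmt_11 {n : ℕ} (hn : 2 ≤ n) (A : Matrix (Fin n) (Fin n) ℝ)
    (hsym : A.IsSymm) (hpos : A.PosDef) (b : Fin n → ℝ) (hb : b ≠ 0)
    (P Q K : ℝ)
    (h : ∀ y : Fin n → ℝ,
      P * (alphaOf A y)^4 + Q * betaOf b y * (alphaOf A y)^3
        - 6 * K * (betaOf b y)^2 * (alphaOf A y)^2
        - 4 * K * (betaOf b y)^3 * alphaOf A y
        - K * (betaOf b y)^4 = 0) :
    K = 0 ∧ P = 0 ∧ Q = 0 :=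
  stmt_11_general hn A hpos b hb P Q K h
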